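/- Let μ ≥ 0, δ ∈ (0,1), and let N ≥ 0 be a real number satisfying N ≤ μ + √(2·μ·log(1/δ)) + (2/3)·log(1/δ). Then 2·log(1/δ) + N + √(2·N·log(1/δ)) ≤ μ + (14/3)·log(1/δ) + 2·√(2·μ·log(1/δ)); that is, U₊(N,δ) ≤ Ū₊(μ,δ). -/

import Mathlib

open Real

/-! With `L = log (1/δ) ≥ 0` and `s = √(2μL)`, the hypothesis gives
`2NL ≤ s² + 2Ls + (4/3)L² ≤ (s + 2L)²`, so `√(2NL) ≤ s + 2L`; adding this to the hypothesis
bound on `N` yields the claim. -/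

lemma sqrt_two_mul_le_of_le_add_sqrt {μ N L : ℝ} (hμ : 0 ≤ μ) (hL : 0 ≤ L)
    (h : N ≤ μ + √(2 * μ * L) + 2 / 3 * L) :
    √(2 * N * L) ≤ √(2 * μ * L) + 2 * L := by
  have hs : √(2 * μ * L) ^ 2 = 2 * μ * L := sq_sqrt (by positivity)
  rw [sqrt_le_iff]
  refine ⟨by positivity, ?_⟩
  nlinarith [mul_le_mul_of_nonneg_left h hL, mul_nonneg hL (sqrt_nonneg (2 * μ * L)),
    mul_nonneg hL hL]

lemma add_sqrt_le_of_le_add_sqrt {μ N L : ℝ} (hμ : 0 ≤ μ) (hL : 0 ≤ L)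
    (h : N ≤ μ + √(2 * μ * L) + 2 / 3 * L) :
    2 * L + N + √(2 * N * L) ≤ μ + 14 / 3 * L + 2 * √(2 * μ * L) := by
  linarith [sqrt_two_mul_le_of_le_add_sqrt hμ hL h]

theorem Uplus_le_UbarPlus (μ δ N : ℝ) (hμ : 0 ≤ μ) (hδ : δ ∈ Set.Ioo (0 : ℝ) 1)
    (h : N ≤ μ + Real.sqrt (2 * μ * Real.log (1 / δ)) + (2 / 3) * Real.log (1 / δ)) :
    2 * Real.log (1 / δ) + N + Real.sqrt (2 * N * Real.log (1 / δ)) ≤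
      μ + (14 / 3) * Real.log (1 / δ) + 2 * Real.sqrt (2 * μ * Real.log (1 / δ)) :=
  add_sqrt_le_of_le_add_sqrt hμ (log_nonneg (one_le_one_div hδ.1 hδ.2.le)) h
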